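/- Let 𝒜 be any output AOE of the simplification algorithm (a graph obtained from a canonical AOE by applying Rules 1, 2, 3 until none applies). Then for every unlabeled edge (u, v) of 𝒜 there exist tasks T and T' such that u = End_𝒜(T) and v = St_𝒜(T'). -/

import Mathlib

namespace AOEPaper

/-- An activity-on-edge graph: a directed multigraph on the vertex set `verts`,
whose task edges are indexed by the type `T` (the distinct task labels), each task `t`
being an edge from `St t` to `En t`, together with a multiset `unl` of unlabeled edges. -/
structure AOE (V T : Type) where
  verts : Finset V
  St : T → V
  En : T → V
  stMem : ∀ t, St t ∈ verts
  enMem : ∀ t, En t ∈ verts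
  unl : Multiset (V × V)
  unlMem : ∀ e ∈ unl, e.1 ∈ verts ∧ e.2 ∈ verts

/-- One-step adjacency: an unlabeled edge or a task edge from `a` to `b`. -/
def AOE.adj {V T : Type} (G : AOE V T) (a b : V) : Prop :=
  (a, b) ∈ G.unl ∨ ∃ t, G.St t = a ∧ G.En t = b

/-- The graph has no directed cycle. -/
def AOE.Acyclic {V T : Type} (G : AOE V T) : Prop :=
  ∀ v : V, ¬ Relation.TransGen G.adj v v

/-- Task `t` reaches task `t'`: `En t = St t'` or there is a directed path from
`En t` to `St t'` (intended only for `t ≠ t'`). -/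
def AOE.reach {V T : Type} (G : AOE V T) (t t' : T) : Prop :=
  Relation.ReflTransGen G.adj (G.En t) (G.St t')

/-- A sequence of tasks in which each task reaches the next. -/
def AOE.chain {V T : Type} (G : AOE V T) (l : List T) : Prop :=
  l.Chain' fun t t' => t ≠ t' ∧ G.reach t t'

/-- A potential critical path: a maximal sequence of tasks in which each task
reaches the next (not a subsequence of any other such sequence). -/
def AOE.critPath {V T : Type} (G : AOE V T) (l : List T) : Prop :=
  G.chain l ∧ ∀ l' : List T, G.chain l' → l.Sublist l' → l' = l

/-- Two AOEs with the same task labels are equivalent if they have the same set of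
potential critical paths. -/
def AOE.Equiv {V W T : Type} (G : AOE V T) (H : AOE W T) : Prop :=
  ∀ l : List T, G.critPath l ↔ H.critPath l

/-- An AOE is optimal if it minimizes the number of vertices in its equivalence class. -/
def Optimal {W T : Type} (G : AOE W T) : Prop :=
  ∀ (U : Type) (H : AOE U T), H.Acyclic → AOE.Equiv G H → G.verts.card ≤ H.verts.card

/-- The vertex map replacing `v` by `u`. -/
def mergeV {V : Type} [DecidableEq V] (u v x : V) : V := if x = v then u else x

theorem mergeV_mem {V : Type} [DecidableEq V] {S : Finset V} (u v x : V) (hx : x ∈ S) :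
    mergeV u v x ∈ insert u (S.erase v) := by
  unfold mergeV
  split_ifs with h
  · exact Finset.mem_insert_self _ _
  · exact Finset.mem_insert_of_mem (Finset.mem_erase.mpr ⟨h, hx⟩)

/-- Merge vertices `u` and `v` into the single vertex `u`. -/
def AOE.merge {V T : Type} [DecidableEq V] (G : AOE V T) (u v : V) : AOE V T where
  verts := insert u (G.verts.erase v)
  St t := mergeV u v (G.St t)
  En t := mergeV u v (G.En t)
  stMem t := mergeV_mem u v (G.St t) (G.stMem t)
  enMem t := mergeV_mem u v (G.En t) (G.enMem t)
  unl := G.unl.map fun e => (mergeV u v e.1, mergeV u v e.2)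
  unlMem := by
    intro e he
    rw [Multiset.mem_map] at he
    obtain ⟨a, ha, rfl⟩ := he
    obtain ⟨h1, h2⟩ := G.unlMem a ha
    exact ⟨mergeV_mem u v a.1 h1, mergeV_mem u v a.2 h2⟩

/-- Delete one copy of the unlabeled edge `(u, v)`. -/
def AOE.delUnl {V T : Type} [DecidableEq V] (G : AOE V T) (u v : V) : AOE V T where
  verts := G.verts
  St := G.St
  En := G.En
  stMem := G.stMem
  enMem := G.enMem
  unl := G.unl.erase (u, v)
  unlMem := fun e he => G.unlMem e (Multiset.mem_of_mem_erase he)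

/-- Rule 1 (outgoing version): `u` and `v` are distinct vertices with no outgoing task
edges and precisely the same outgoing neighbors. -/
def Rule1OutCond {V T : Type} (G : AOE V T) (u v : V) : Prop :=
  u ∈ G.verts ∧ v ∈ G.verts ∧ u ≠ v ∧
    (∀ t, G.St t ≠ u) ∧ (∀ t, G.St t ≠ v) ∧ ∀ w, G.adj u w ↔ G.adj v w

/-- Rule 1 (incoming version): `u` and `v` are distinct vertices with no incoming task
edges and precisely the same incoming neighbors. -/
def Rule1InCond {V T : Type} (G : AOE V T) (u v : V) : Prop :=
  u ∈ G.verts ∧ v ∈ G.verts ∧ u ≠ v ∧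
    (∀ t, G.En t ≠ u) ∧ (∀ t, G.En t ≠ v) ∧ ∀ w, G.adj w u ↔ G.adj w v

/-- Rule 2: `(u, v)` is an unlabeled edge and there is another directed path from `u`
to `v` not using this edge. -/
def Rule2Cond {V T : Type} [DecidableEq V] (G : AOE V T) (u v : V) : Prop :=
  (u, v) ∈ G.unl ∧ Relation.TransGen (G.delUnl u v).adj u v

/-- Rule 3: `(u, v)` is an unlabeled edge such that (i) there is no other path from `u`
to `v`; (ii) if `u` has an outgoing task then `v` has no incoming edge other than `(u,v)`;
(iii) if `v` has an incoming task then `u` has no outgoing edge other than `(u,v)`;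
(iv) every incoming neighbor of `v` has a path to every outgoing neighbor of `u`. -/
def Rule3Cond {V T : Type} [DecidableEq V] (G : AOE V T) (u v : V) : Prop :=
  (u, v) ∈ G.unl ∧
  (¬ Relation.TransGen (G.delUnl u v).adj u v) ∧
  ((∃ t, G.St t = u) → (∀ t, G.En t ≠ v) ∧ ∀ w, (w, v) ∈ G.unl → w = u) ∧
  ((∃ t, G.En t = v) → (∀ t, G.St t ≠ u) ∧ ∀ w, (u, w) ∈ G.unl → w = v) ∧
  ∀ w z, G.adj w v → G.adj u z → Relation.ReflTransGen G.adj w z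

/-- One application of a simplification rule. -/
inductive Step {V T : Type} [DecidableEq V] : AOE V T → AOE V T → Prop
  | rule1out {G : AOE V T} (u v : V) : Rule1OutCond G u v → Step G (G.merge u v)
  | rule1in {G : AOE V T} (u v : V) : Rule1InCond G u v → Step G (G.merge u v)
  | rule2 {G : AOE V T} (u v : V) : Rule2Cond G u v → Step G (G.delUnl u v)
  | rule3 {G : AOE V T} (u v : V) : Rule3Cond G u v → Step G ((G.delUnl u v).merge u v)

/-- A canonical AOE: the naive expansion of an activity-on-node graph. Each task has its
own pair of endpoint vertices, all pairwise distinct; there are a global start vertex `s`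
and a global end vertex `e`; unlabeled edges other than those leaving `s` or entering `e`
go from end vertices of tasks to start vertices of tasks; `s` has unlabeled edges to
exactly the vertices whose only incoming edges come from `s`, and `e` has unlabeled edges
from exactly the vertices whose only outgoing edges go to `e`. -/
def Canonical {V T : Type} [DecidableEq V] [Fintype T] (G : AOE V T) : Prop :=
  G.Acyclic ∧ G.unl.Nodup ∧
  Function.Injective G.St ∧ Function.Injective G.En ∧
  (∀ t t' : T, G.St t ≠ G.En t') ∧
  ∃ s e : V, s ≠ e ∧ s ∈ G.verts ∧ e ∈ G.verts ∧
    (∀ t, G.St t ≠ s ∧ G.St t ≠ e ∧ G.En t ≠ s ∧ G.En t ≠ e) ∧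
    (G.verts =
      insert s (insert e (Finset.image G.St Finset.univ ∪ Finset.image G.En Finset.univ))) ∧
    (∀ a b : V, (a, b) ∈ G.unl → a ≠ s → b ≠ e → (∃ t, G.En t = a) ∧ ∃ t', G.St t' = b) ∧
    (∀ b : V, (s, b) ∈ G.unl ↔
      b ∈ G.verts ∧ b ≠ s ∧ (∀ t, G.En t ≠ b) ∧ ∀ a, (a, b) ∈ G.unl → a = s) ∧
    (∀ a : V, (a, e) ∈ G.unl ↔
      a ∈ G.verts ∧ a ≠ e ∧ (∀ t, G.St t ≠ a) ∧ ∀ b, (a, b) ∈ G.unl → b = e)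

/-- An output AOE: obtained from a canonical AOE by a finite sequence of rule
applications, such that no rule can still be applied. -/
def IsOutput {V T : Type} [DecidableEq V] [Fintype T] (G A : AOE V T) : Prop :=
  Canonical G ∧ Relation.ReflTransGen Step G A ∧ ∀ B : AOE V T, ¬ Step A B

theorem mergeSetV_mem {V : Type} [DecidableEq V] {S : Finset V} (C : Finset V) (c x : V)
    (hx : x ∈ S) : (if x ∈ C then c else x) ∈ insert c (S \ C) := by
  split_ifs with h
  · exact Finset.mem_insert_self _ _
  · exact Finset.mem_insert_of_mem (Finset.mem_sdiff.mpr ⟨hx, h⟩)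

/-- Merge all vertices of `C` into the single vertex `c`. -/
def AOE.mergeSet {V T : Type} [DecidableEq V] (G : AOE V T) (C : Finset V) (c : V) :
    AOE V T where
  verts := insert c (G.verts \ C)
  St t := if G.St t ∈ C then c else G.St t
  En t := if G.En t ∈ C then c else G.En t
  stMem t := mergeSetV_mem C c (G.St t) (G.stMem t)
  enMem t := mergeSetV_mem C c (G.En t) (G.enMem t)
  unl := G.unl.map fun e => (if e.1 ∈ C then c else e.1, if e.2 ∈ C then c else e.2)
  unlMem := by
    intro e he
    rw [Multiset.mem_map] at he
    obtain ⟨a, ha, rfl⟩ := he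
    obtain ⟨h1, h2⟩ := G.unlMem a ha
    exact ⟨mergeSetV_mem C c a.1 h1, mergeSetV_mem C c a.2 h2⟩

/-! Consider the invariant: the graph is acyclic, it has a unique source and a unique sink, and
the tail of every unlabeled edge is the end of a task or a source all of whose unlabeled
successors have no other predecessor (dually for heads). It holds in a canonical AOE, whose only
source is the global start vertex, and every rule preserves it. In an output AOE, an unlabeled
edge `(u, v)` leaving such a source `u` would be deleted by Rule 2 or contracted by Rule 3, so `u`
is the end of a task. Heads are handled by reversing all edges, which exchanges the rules. -/

open Relation

namespace AOE

section

variable {V T : Type}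

def IsSource (G : AOE V T) (a : V) : Prop :=
  ∀ w, ¬ G.adj w a

def sources (G : AOE V T) : Set V :=
  {a | a ∈ G.verts ∧ G.IsSource a}

structure IsPrivateSource (G : AOE V T) (a : V) : Prop where
  isSource : G.IsSource a
  eq_of_adj : ∀ b, (a, b) ∈ G.unl → ∀ w, G.adj w b → w = a

structure SourceInv (G : AOE V T) : Prop where
  sources_subsingleton : G.sources.Subsingleton
  tail : ∀ a b, (a, b) ∈ G.unl → (∃ t, G.En t = a) ∨ G.IsPrivateSource a

def reverse (G : AOE V T) : AOE V T where
  verts := G.verts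
  St := G.En
  En := G.St
  stMem := G.enMem
  enMem := G.stMem
  unl := G.unl.map Prod.swap
  unlMem e he := by
    obtain ⟨a, ha, rfl⟩ := Multiset.mem_map.1 he
    exact (G.unlMem a ha).symm

/-- `G.reverse.SourceInv` is the dual condition: the sink is unique, and the head of every
unlabeled edge is the start of a task or a sink that is the only successor of each of its
unlabeled predecessors. -/
structure Inv (G : AOE V T) : Prop where
  acyclic : G.Acyclic
  sourceInv : G.SourceInv
  reverse_sourceInv : G.reverse.SourceInv

variable {G : AOE V T} {a b x y : V}

theorem adj_mem_right (h : G.adj a b) : b ∈ G.verts := by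
  rcases h with h | ⟨t, -, rfl⟩
  exacts [(G.unlMem _ h).2, G.enMem t]

theorem Acyclic.not_transGen_of_forall_adj_iff (hG : G.Acyclic)
    (hxy : ∀ w, G.adj x w ↔ G.adj y w) : ¬ TransGen G.adj x y := fun h => by
  obtain ⟨w, hxw, hwy⟩ := TransGen.head'_iff.1 h
  exact hG y (.head' ((hxy w).1 hxw) hwy)

theorem Acyclic.exists_mem_forall_not_adj (hG : G.Acyclic) {F : Finset V} (hF : F.Nonempty) :
    ∃ a ∈ F, ∀ w ∈ F, ¬ G.adj a w := by
  let r : F → F → Prop := fun p q => TransGen G.adj q.1 p.1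
  have : IsTrans F r := ⟨fun _ _ _ h₁ h₂ => h₂.trans h₁⟩
  have : Std.Irrefl r := ⟨fun p => hG p.1⟩
  obtain ⟨⟨a, ha⟩, -, hmin⟩ :=
    (Finite.wellFounded_of_trans_of_irrefl r).has_min Set.univ ⟨⟨_, hF.choose_spec⟩, ⟨⟩⟩
  exact ⟨a, ha, fun w hw hadj => hmin ⟨w, hw⟩ trivial (.single hadj)⟩

@[simp]
theorem mem_reverse_unl : (a, b) ∈ G.reverse.unl ↔ (b, a) ∈ G.unl := by
  simp [reverse]

@[simp]
theorem reverse_adj : G.reverse.adj a b ↔ G.adj b a := by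
  simp only [adj, mem_reverse_unl]
  simp [reverse, and_comm]

theorem reverse_reverse (G : AOE V T) : G.reverse.reverse = G := by
  cases G
  simp [reverse, Multiset.map_map]

theorem isSource_reverse : G.reverse.IsSource a ↔ ∀ w, ¬ G.adj a w := by
  simp [IsSource]

theorem transGen_reverse_adj : TransGen G.reverse.adj a b ↔ TransGen G.adj b a := by
  have : G.reverse.adj = Function.swap G.adj := by ext; exact reverse_adj
  rw [this, transGen_swap]

theorem reflTransGen_reverse_adj : ReflTransGen G.reverse.adj a b ↔ ReflTransGen G.adj b a := by
  have : G.reverse.adj = Function.swap G.adj := by ext; exact reverse_adj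
  rw [this, reflTransGen_swap]

theorem Acyclic.reverse (hG : G.Acyclic) : G.reverse.Acyclic :=
  fun v hv => hG v (transGen_reverse_adj.1 hv)

theorem Inv.reverse (hG : G.Inv) : G.reverse.Inv :=
  ⟨hG.acyclic.reverse, hG.reverse_sourceInv, G.reverse_reverse.symm ▸ hG.sourceInv⟩

end

end AOE

section

variable {V : Type} [DecidableEq V] {c d a b : V}

theorem mergeV_of_ne (h : a ≠ d) : mergeV c d a = a :=
  if_neg h

theorem mergeV_eq_left_iff : mergeV c d a = c ↔ a ∈ ({c, d} : Set V) := by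
  unfold mergeV
  simp only [Set.mem_insert_iff, Set.mem_singleton_iff]
  split_ifs <;> grind

theorem mergeV_eq_mergeV_iff :
    mergeV c d a = mergeV c d b ↔
      a = b ∨ a ∈ ({c, d} : Set V) ∧ b ∈ ({c, d} : Set V) := by
  unfold mergeV
  simp only [Set.mem_insert_iff, Set.mem_singleton_iff]
  split_ifs <;> grind

end

namespace AOE

variable {V T : Type} [DecidableEq V] {G : AOE V T} {a b c d p q u v : V}

theorem mem_merge_unl :
    (p, q) ∈ (G.merge c d).unl ↔
      ∃ a b, (a, b) ∈ G.unl ∧ mergeV c d a = p ∧ mergeV c d b = q := by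
  simp [merge]

theorem merge_adj :
    (G.merge c d).adj p q ↔ ∃ a b, G.adj a b ∧ mergeV c d a = p ∧ mergeV c d b = q := by
  simp only [adj, mem_merge_unl]
  constructor
  · rintro (⟨a, b, hab, rfl, rfl⟩ | ⟨t, rfl, rfl⟩)
    exacts [⟨a, b, .inl hab, rfl, rfl⟩, ⟨_, _, .inr ⟨t, rfl, rfl⟩, rfl, rfl⟩]
  · rintro ⟨a, b, hab | ⟨t, rfl, rfl⟩, rfl, rfl⟩
    exacts [.inl ⟨a, b, hab, rfl, rfl⟩, .inr ⟨t, rfl, rfl⟩]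

theorem adj.merge (h : G.adj a b) : (G.merge c d).adj (mergeV c d a) (mergeV c d b) :=
  merge_adj.2 ⟨a, b, h, rfl, rfl⟩

theorem IsSource.of_merge (h : (G.merge c d).IsSource (mergeV c d a)) : G.IsSource a :=
  fun w hw => h (mergeV c d w) hw.merge

theorem sources_merge_subset (hc : c ∈ G.verts) :
    (G.merge c d).sources ⊆ mergeV c d '' G.sources := by
  rintro q ⟨hq, hqs⟩
  obtain ⟨r, hr, rfl⟩ : ∃ r ∈ G.verts, mergeV c d r = q := by
    rcases Finset.mem_insert.1 hq with rfl | hq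
    · exact ⟨q, hc, mergeV_eq_left_iff.2 (.inl rfl)⟩
    · exact ⟨q, Finset.mem_of_mem_erase hq, mergeV_of_ne (Finset.ne_of_mem_erase hq)⟩
  exact ⟨r, ⟨hr, hqs.of_merge⟩, rfl⟩

theorem adj_of_delUnl_adj (h : (G.delUnl u v).adj a b) : G.adj a b :=
  h.imp_left Multiset.mem_of_mem_erase

theorem transGen_of_delUnl (h : TransGen (G.delUnl u v).adj a b) : TransGen G.adj a b :=
  TransGen.mono (fun _ _ => adj_of_delUnl_adj) _ _ h

theorem delUnl_adj_of_ne (h : G.adj a b) (hab : (a, b) ≠ (u, v)) : (G.delUnl u v).adj a b :=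
  h.imp_left (Multiset.mem_erase_of_ne hab).2

theorem IsSource.of_delUnl (h : (G.delUnl u v).IsSource a) (hav : a ≠ v) : G.IsSource a :=
  fun w hw => h w (delUnl_adj_of_ne hw fun he => hav (congrArg Prod.snd he))

theorem IsPrivateSource.delUnl (h : G.IsPrivateSource a) : (G.delUnl u v).IsPrivateSource a :=
  ⟨fun w hw => h.isSource w (adj_of_delUnl_adj hw),
    fun b hb w hw => h.eq_of_adj b (Multiset.mem_of_mem_erase hb) w (adj_of_delUnl_adj hw)⟩

theorem Acyclic.delUnl (hG : G.Acyclic) : (G.delUnl u v).Acyclic :=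
  fun w hw => hG w (transGen_of_delUnl hw)

theorem reverse_merge (G : AOE V T) (c d : V) : (G.merge c d).reverse = G.reverse.merge c d := by
  simp only [merge, reverse, Multiset.map_map]
  rfl

theorem reverse_delUnl (G : AOE V T) (u v : V) :
    (G.delUnl u v).reverse = G.reverse.delUnl v u := by
  simp only [delUnl, reverse, Multiset.map_erase _ Prod.swap_injective]
  rfl

end AOE

section

variable {V T : Type} {G : AOE V T} {u v : V}

theorem Rule1OutCond.reverse (h : Rule1OutCond G u v) : Rule1InCond G.reverse u v :=
  let ⟨hu, hv, huv, huSt, hvSt, hiff⟩ := h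
  ⟨hu, hv, huv, huSt, hvSt, fun w => by simpa using hiff w⟩

theorem Rule1InCond.reverse (h : Rule1InCond G u v) : Rule1OutCond G.reverse u v :=
  let ⟨hu, hv, huv, huEn, hvEn, hiff⟩ := h
  ⟨hu, hv, huv, huEn, hvEn, fun w => by simpa using hiff w⟩

variable [DecidableEq V]

theorem Rule2Cond.reverse (h : Rule2Cond G u v) : Rule2Cond G.reverse v u := by
  refine ⟨AOE.mem_reverse_unl.2 h.1, ?_⟩
  rw [← AOE.reverse_delUnl]
  exact AOE.transGen_reverse_adj.2 h.2

theorem Rule3Cond.reverse (h : Rule3Cond G u v) : Rule3Cond G.reverse v u := by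
  obtain ⟨huv, hi, hii, hiii, hiv⟩ := h
  refine ⟨AOE.mem_reverse_unl.2 huv, ?_, ?_, ?_, fun w z hw hz => ?_⟩
  · rwa [← AOE.reverse_delUnl, AOE.transGen_reverse_adj]
  · exact fun ht => (hiii ht).imp_right fun h w hw => h w (AOE.mem_reverse_unl.1 hw)
  · exact fun ht => (hii ht).imp_right fun h w hw => h w (AOE.mem_reverse_unl.1 hw)
  · exact AOE.reflTransGen_reverse_adj.2 (hiv z w (AOE.reverse_adj.1 hz) (AOE.reverse_adj.1 hw))

end

namespace AOE

variable {V T : Type} [DecidableEq V] {G H A : AOE V T} {a c d u v x y : V}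

/-- A path of the merged graph lifts to a path of `G`, except that it may pass through the merged
vertex `c`; then only its part after the last visit of `c` lifts. -/
theorem exists_transGen_of_transGen_merge {p q : V} (h : TransGen (G.merge c d).adj p q) :
    ∃ a b, mergeV c d b = q ∧ TransGen G.adj a b ∧
      (mergeV c d a = p ∨ a ∈ ({c, d} : Set V) ∧ ReflTransGen (G.merge c d).adj p c) := by
  induction h with
  | single h =>
    obtain ⟨a, b, hab, rfl, rfl⟩ := merge_adj.1 h
    exact ⟨a, b, rfl, .single hab, .inl rfl⟩
  | tail hpq hqr ih =>
    obtain ⟨a, b, rfl, hab, ha⟩ := ih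
    obtain ⟨b', e, hb'e, hb', rfl⟩ := merge_adj.1 hqr
    rcases mergeV_eq_mergeV_iff.1 hb' with rfl | ⟨hb'S, hbS⟩
    · exact ⟨a, e, rfl, hab.tail hb'e, ha⟩
    · have hpc := hpq.to_reflTransGen
      rw [mergeV_eq_left_iff.2 hbS] at hpc
      exact ⟨b', e, rfl, .single hb'e, .inr ⟨hb'S, hpc⟩⟩

theorem Acyclic.merge (hG : G.Acyclic)
    (hS : ∀ a ∈ ({c, d} : Set V), ∀ b ∈ ({c, d} : Set V), ¬ TransGen G.adj a b) :
    (G.merge c d).Acyclic := by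
  intro p hp
  obtain ⟨a, b, hb, hab, ha | ⟨haS, hpc⟩⟩ := exists_transGen_of_transGen_merge hp
  · rcases mergeV_eq_mergeV_iff.1 (ha.trans hb.symm) with rfl | ⟨haS, hbS⟩
    exacts [hG _ hab, hS a haS b hbS hab]
  · -- the cycle passes through `c`, and a cycle at `c` lifts to a path of `G` inside `{c, d}`
    have hcc : TransGen (G.merge c d).adj c c := by
      have : TransGen (G.merge c d).adj (mergeV c d a) (mergeV c d b) :=
        TransGen.lift (mergeV c d) (fun _ _ => adj.merge) _ _ hab
      rw [mergeV_eq_left_iff.2 haS, hb] at this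
      exact this.trans_left hpc
    obtain ⟨a', b', hb', hab', ha'⟩ := exists_transGen_of_transGen_merge hcc
    exact hS a' (ha'.elim mergeV_eq_left_iff.1 And.left) b' (mergeV_eq_left_iff.1 hb') hab'

theorem Acyclic.merge_of_rule1OutCond (hG : G.Acyclic) (h : Rule1OutCond G x y) :
    (G.merge x y).Acyclic := by
  obtain ⟨-, -, -, -, -, hxy⟩ := h
  refine hG.merge ?_
  rintro a (rfl | rfl) b (rfl | rfl)
  exacts [hG _, hG.not_transGen_of_forall_adj_iff hxy,
    hG.not_transGen_of_forall_adj_iff fun w => (hxy w).symm, hG _]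

theorem Acyclic.merge_of_rule1InCond (hG : G.Acyclic) (h : Rule1InCond G x y) :
    (G.merge x y).Acyclic := by
  have := (hG.reverse.merge_of_rule1OutCond h.reverse).reverse
  rwa [← reverse_merge, reverse_reverse] at this

theorem Acyclic.merge_of_rule3Cond (hG : G.Acyclic) (h : Rule3Cond G u v) :
    ((G.delUnl u v).merge u v).Acyclic := by
  obtain ⟨huv, hi, -⟩ := h
  refine hG.delUnl.merge ?_
  rintro a (rfl | rfl) b (rfl | rfl)
  exacts [hG.delUnl _, hi, fun hvu => hG _ ((transGen_of_delUnl hvu).tail (.inl huv)),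
    hG.delUnl _]

theorem Acyclic.of_step (hG : G.Acyclic) : Step G H → H.Acyclic
  | .rule1out _ _ h => hG.merge_of_rule1OutCond h
  | .rule1in _ _ h => hG.merge_of_rule1InCond h
  | .rule2 _ _ _ => hG.delUnl
  | .rule3 _ _ h => hG.merge_of_rule3Cond h

theorem IsPrivateSource.merge (ha : G.IsPrivateSource a) (haS : a ∉ ({c, d} : Set V))
    (hch : ∀ b b', (a, b) ∈ G.unl → mergeV c d b' = mergeV c d b →
      ∀ w, G.adj w b' → w = a) :
    (G.merge c d).IsPrivateSource (mergeV c d a) := by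
  have hfib : ∀ a', mergeV c d a' = mergeV c d a → a' = a := fun a' h =>
    (mergeV_eq_mergeV_iff.1 h).resolve_right fun h => haS h.2
  refine ⟨fun w hw => ?_, fun q hq w hw => ?_⟩
  · obtain ⟨w', a', hw'a', -, ha'⟩ := merge_adj.1 hw
    exact ha.isSource w' (hfib a' ha' ▸ hw'a')
  · obtain ⟨a', b, ha'b, ha', rfl⟩ := mem_merge_unl.1 hq
    obtain ⟨w', b', hw'b', rfl, hb'⟩ := merge_adj.1 hw
    rw [hch b b' (hfib a' ha' ▸ ha'b) hb' w' hw'b']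

theorem sourceInv_merge (hs : (G.merge c d).sources.Subsingleton)
    (ht : ∀ a b, (a, b) ∈ G.unl →
      (∃ t, G.En t = a) ∨ (G.merge c d).IsPrivateSource (mergeV c d a)) :
    (G.merge c d).SourceInv := by
  refine ⟨hs, fun p q hpq => ?_⟩
  obtain ⟨a, b, hab, rfl, -⟩ := mem_merge_unl.1 hpq
  exact (ht a b hab).imp_left fun ⟨t, ht⟩ => ⟨t, congrArg (mergeV c d) ht⟩

/-- No unlabeled edge enters the merged vertices: by the dual invariant they would be sinks, and
the sink is unique. -/
theorem sourceInv_merge_of_rule1OutCond (hG : G.SourceInv) (hG' : G.reverse.SourceInv)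
    (h : Rule1OutCond G x y) : (G.merge x y).SourceInv := by
  obtain ⟨hsrc, htail⟩ := hG
  obtain ⟨hsink, hhead⟩ := hG'
  obtain ⟨hx, hy, hxy, hxSt, hySt, hiff⟩ := h
  have hx_out : ¬ ∀ w, ¬ G.adj x w := fun hxs => hxy (hsink ⟨hx, isSource_reverse.2 hxs⟩
    ⟨hy, isSource_reverse.2 fun w hw => hxs w ((hiff w).2 hw)⟩)
  have hno_in : ∀ w b, (w, b) ∈ G.unl → b ∉ ({x, y} : Set V) := by
    rintro w b hwb hb
    rcases hhead b w (mem_reverse_unl.2 hwb) with ⟨t, ht⟩ | hb'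
    · rcases hb with rfl | rfl
      exacts [hxSt t ht, hySt t ht]
    · have hb_out := isSource_reverse.1 hb'.isSource
      rcases hb with rfl | rfl
      exacts [hx_out hb_out, hx_out fun w hw => hb_out w ((hiff w).1 hw)]
  refine sourceInv_merge ((hsrc.image _).anti (sources_merge_subset hx)) fun a b hab => ?_
  refine (htail a b hab).imp_right fun ha => ha.merge ?_ fun b b' hab' hbb' w hw => ?_
  · rintro (rfl | rfl)
    exacts [hxy (ha.eq_of_adj b hab y ((hiff b).1 (.inl hab))).symm,
      hxy (ha.eq_of_adj b hab x ((hiff b).2 (.inl hab)))]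
  · have hb' : b' = b :=
      (mergeV_eq_mergeV_iff.1 hbb').resolve_right fun h => hno_in a b hab' h.2
    exact ha.eq_of_adj b hab' w (hb' ▸ hw)

theorem sourceInv_merge_of_rule1InCond (hG : G.SourceInv) (h : Rule1InCond G x y) :
    (G.merge x y).SourceInv := by
  obtain ⟨hsrc, htail⟩ := hG
  obtain ⟨hx, hy, hxy, -, -, hiff⟩ := h
  refine sourceInv_merge ((hsrc.image _).anti (sources_merge_subset hx)) fun a b hab => ?_
  refine (htail a b hab).imp_right fun ha => ha.merge ?_ fun b b' hab' hbb' w hw => ?_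
  · rintro (rfl | rfl)
    exacts [hxy (hsrc ⟨hx, ha.isSource⟩ ⟨hy, fun w hw => ha.isSource w ((hiff w).2 hw)⟩),
      hxy (hsrc ⟨hx, fun w hw => ha.isSource w ((hiff w).1 hw)⟩ ⟨hy, ha.isSource⟩)]
  · refine ha.eq_of_adj b hab' w ?_
    rcases mergeV_eq_mergeV_iff.1 hbb' with rfl | ⟨hb'S, hbS⟩
    · exact hw
    · rcases hb'S with rfl | rfl <;> rcases hbS with rfl | rfl
      exacts [hw, (hiff w).1 hw, (hiff w).2 hw, hw]

theorem sourceInv_delUnl_of_rule2Cond (hG : G.SourceInv) (h : Rule2Cond G u v) :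
    (G.delUnl u v).SourceInv := by
  obtain ⟨hsrc, htail⟩ := hG
  refine ⟨hsrc.anti fun r ⟨hr, hrs⟩ => ⟨hr, hrs.of_delUnl fun hrv => ?_⟩, fun a b hab => ?_⟩
  · -- `v` keeps an incoming edge: the last one of the other path from `u`
    obtain ⟨w, -, hw⟩ := TransGen.tail'_iff.1 h.2
    exact hrs w (hrv ▸ hw)
  · exact (htail a b (Multiset.mem_of_mem_erase hab)).imp_right IsPrivateSource.delUnl

theorem sources_delUnl_merge_subset (hG : G.Acyclic) (huv : (u, v) ∈ G.unl)
    (hcd : ({c, d} : Set V) = {u, v}) :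
    ((G.delUnl u v).merge c d).sources ⊆ mergeV c d '' G.sources := by
  have hne : u ≠ v := by
    rintro rfl
    exact hG u (.single (.inl huv))
  have hc : c ∈ G.verts := by
    rcases (hcd ▸ Set.mem_insert c {d} : c ∈ ({u, v} : Set V)) with rfl | rfl
    exacts [(G.unlMem _ huv).1, (G.unlMem _ huv).2]
  intro q hq
  obtain ⟨r, ⟨hr, hrs⟩, rfl⟩ := sources_merge_subset (d := d) (G := G.delUnl u v) hc hq
  by_cases hrv : r = v
  · subst hrv
    have hfu : mergeV c d u = mergeV c d r :=
      mergeV_eq_mergeV_iff.2 (.inr ⟨hcd ▸ .inl rfl, hcd ▸ .inr rfl⟩)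
    exact ⟨u, ⟨(G.unlMem _ huv).1, (hfu ▸ hq.2).of_merge.of_delUnl hne⟩, hfu⟩
  · exact ⟨r, ⟨hr, hrs.of_delUnl hrv⟩, rfl⟩

theorem IsPrivateSource.merge_of_rule3Cond (hac : G.Acyclic) (hG : G.SourceInv)
    (h : Rule3Cond G u v) (hcd : ({c, d} : Set V) = {u, v}) (hu : G.IsPrivateSource u) :
    ((G.delUnl u v).merge c d).IsPrivateSource (mergeV c d u) := by
  obtain ⟨huv, hi, -⟩ := h
  have hno : ¬ (G.delUnl u v).adj u v := fun h => hi (.single h)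
  have hv : ∀ w, ¬ (G.delUnl u v).adj w v := fun w hw =>
    hno (hu.eq_of_adj v huv w (adj_of_delUnl_adj hw) ▸ hw)
  have hfu : ∀ r, mergeV c d r = mergeV c d u ↔ r = u ∨ r = v := fun r => by
    rw [mergeV_eq_mergeV_iff, hcd]
    simp
  refine ⟨fun w hw => ?_, fun q hq w hw => ?_⟩
  · obtain ⟨w', r, hw'r, -, hr⟩ := merge_adj.1 hw
    rcases (hfu r).1 hr with rfl | rfl
    exacts [hu.isSource w' (adj_of_delUnl_adj hw'r), hv w' hw'r]
  · obtain ⟨a', b, ha'b, ha', rfl⟩ := mem_merge_unl.1 hq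
    -- `v` is not the tail of an unlabeled edge: it is not a source, and a task ending at `v`
    -- would start at `u`, giving another path from `u` to `v`
    obtain rfl : u = a' := (((hfu a').1 ha').resolve_right fun hav => by
      rw [hav] at ha'b
      rcases hG.tail v b (Multiset.mem_of_mem_erase ha'b) with ⟨t, ht⟩ | hv'
      · exact hno (.inr ⟨t, hu.eq_of_adj _ huv _ (.inr ⟨t, rfl, ht⟩), ht⟩)
      · exact hv'.isSource u (.inl huv)).symm
    have hbS : mergeV c d b ≠ mergeV c d u := fun hb => by
      rcases (hfu b).1 hb with rfl | rfl
      exacts [hac b (.single (adj_of_delUnl_adj (.inl ha'b))), hno (.inl ha'b)]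
    obtain ⟨w', b', hw'b', rfl, hb'⟩ := merge_adj.1 hw
    obtain rfl : b = b' := ((mergeV_eq_mergeV_iff.1 hb').resolve_right fun hS =>
      hbS (mergeV_eq_mergeV_iff.2 (.inr ⟨hS.2, hcd ▸ .inl rfl⟩))).symm
    exact (hfu w').2 (.inl (hu.eq_of_adj b (Multiset.mem_of_mem_erase ha'b) w'
      (adj_of_delUnl_adj hw'b')))

/-- The merged vertex may carry either name: reversing the result of Rule 3 on `(u, v)` gives
`G.reverse` with `(v, u)` contracted into `u`. -/
theorem sourceInv_of_rule3Cond (hG : G.Inv) (h : Rule3Cond G u v)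
    (hcd : ({c, d} : Set V) = {u, v}) : ((G.delUnl u v).merge c d).SourceInv := by
  have hu_merge := fun hu : G.IsPrivateSource u =>
    hu.merge_of_rule3Cond hG.acyclic hG.sourceInv h hcd
  obtain ⟨huv, hi, hii, -, -⟩ := h
  refine sourceInv_merge ((hG.sourceInv.sources_subsingleton.image _).anti
    (sources_delUnl_merge_subset hG.acyclic huv hcd)) fun a b hab => ?_
  refine (hG.sourceInv.tail a b (Multiset.mem_of_mem_erase hab)).imp_right fun ha => ?_
  by_cases haS : a ∈ ({u, v} : Set V)
  · obtain rfl : u = a :=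
      (haS.resolve_right fun hav => ha.isSource u (by rw [hav]; exact .inl huv)).symm
    exact hu_merge ha
  refine ha.delUnl.merge (hcd ▸ haS) fun b₁ b₂ hb₁ hb w hw => ?_
  have hb₁G := Multiset.mem_of_mem_erase hb₁
  rcases mergeV_eq_mergeV_iff.1 hb with rfl | ⟨hb₂S, hb₁S⟩
  · exact ha.eq_of_adj b₂ hb₁G w (adj_of_delUnl_adj hw)
  rw [hcd] at hb₂S hb₁S
  obtain rfl | rfl := hb₁S
  · obtain rfl | rfl := hb₂S
    · exact ha.eq_of_adj _ hb₁G w (adj_of_delUnl_adj hw)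
    -- `u` has a successor, so by the dual invariant it starts a task; then (ii) of Rule 3
    -- leaves `(u, v)`, now deleted, as the only edge into `v`
    rcases hG.reverse_sourceInv.tail _ a (mem_reverse_unl.2 hb₁G) with ⟨t, ht⟩ | hu
    · obtain ⟨hEn, hunl⟩ := hii ⟨t, ht⟩
      rcases hw with hw | ⟨t', -, ht'⟩
      · exact (hi (.single (.inl (hunl w (Multiset.mem_of_mem_erase hw) ▸ hw)))).elim
      · exact (hEn t' ht').elim
    · exact (isSource_reverse.1 hu.isSource _ (.inl huv)).elim
  · exact (haS (.inl (ha.eq_of_adj _ hb₁G _ (.inl huv)).symm)).elim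

theorem Inv.step (hG : G.Inv) (h : Step G H) : H.Inv := by
  refine ⟨hG.acyclic.of_step h, ?_, ?_⟩
  · cases h with
    | rule1out _ _ h => exact sourceInv_merge_of_rule1OutCond hG.sourceInv hG.reverse_sourceInv h
    | rule1in _ _ h => exact sourceInv_merge_of_rule1InCond hG.sourceInv h
    | rule2 _ _ h => exact sourceInv_delUnl_of_rule2Cond hG.sourceInv h
    | rule3 _ _ h => exact sourceInv_of_rule3Cond hG h rfl
  · cases h with
    | rule1out _ _ h =>
      rw [reverse_merge]
      exact sourceInv_merge_of_rule1InCond hG.reverse_sourceInv h.reverse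
    | rule1in _ _ h =>
      rw [reverse_merge]
      exact sourceInv_merge_of_rule1OutCond hG.reverse.sourceInv hG.reverse.reverse_sourceInv
        h.reverse
    | rule2 _ _ h =>
      rw [reverse_delUnl]
      exact sourceInv_delUnl_of_rule2Cond hG.reverse_sourceInv h.reverse
    | rule3 u v h =>
      rw [reverse_merge, reverse_delUnl]
      exact sourceInv_of_rule3Cond hG.reverse h.reverse (Set.pair_comm u v)

theorem Inv.of_reflTransGen (hG : G.Inv) (h : ReflTransGen Step G H) : H.Inv := by
  induction h with
  | refl => exact hG
  | tail _ hs ih => exact ih.step hs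

theorem rule3Cond_of_isPrivateSource (hu : A.IsPrivateSource u) (huv : (u, v) ∈ A.unl)
    (h2 : ¬ Rule2Cond A u v) : Rule3Cond A u v := by
  have hv : ∀ w, A.adj w v → w = u := hu.eq_of_adj v huv
  have hEn : ∀ t, A.En t ≠ v := fun t ht =>
    h2 ⟨huv, .single (.inr ⟨t, hv _ (.inr ⟨t, rfl, ht⟩), ht⟩)⟩
  exact ⟨huv, fun h => h2 ⟨huv, h⟩, fun _ => ⟨hEn, fun w hw => hv w (.inl hw)⟩,
    fun ⟨t, ht⟩ => (hEn t ht).elim, fun w z hw hz => hv w hw ▸ .single hz⟩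

theorem exists_en_eq_of_sourceInv (hA : A.SourceInv) (huv : (u, v) ∈ A.unl)
    (h2 : ¬ Rule2Cond A u v) (h3 : ¬ Rule3Cond A u v) : ∃ t, A.En t = u :=
  (hA.tail u v huv).resolve_right fun hu => h3 (rule3Cond_of_isPrivateSource hu huv h2)

end AOE

section

variable {V T : Type} [DecidableEq V] [Fintype T] {G : AOE V T}

theorem Canonical.reverse (h : Canonical G) : Canonical G.reverse := by
  obtain ⟨hac, hnd, hSinj, hEinj, hSE, s, e, hse, hs, he, hts, hverts, hmain, hsiff, heiff⟩ := h
  refine ⟨hac.reverse, hnd.map Prod.swap_injective, hEinj, hSinj, fun t t' => (hSE t' t).symm,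
    e, s, hse.symm, he, hs, fun t => ?_, ?_, fun a b hab ha hb => ?_, fun b => ?_, fun a => ?_⟩
  · obtain ⟨h1, h2, h3, h4⟩ := hts t
    exact ⟨h4, h3, h2, h1⟩
  · change G.verts = _
    rw [hverts]
    ext a
    simp only [Finset.mem_insert, Finset.mem_union]
    tauto
  · exact (hmain b a (AOE.mem_reverse_unl.1 hab) hb ha).symm
  · simp only [AOE.mem_reverse_unl, heiff]
    rfl
  · simp only [AOE.mem_reverse_unl, hsiff]
    rfl

theorem Canonical.sourceInv (h : Canonical G) : G.SourceInv := by
  obtain ⟨hac, -, -, -, hSE, s, e, hse, hs, he, hts, hverts, hmain, hsiff, heiff⟩ := h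
  have hmem : ∀ {a}, a ∈ G.verts →
      a = s ∨ a = e ∨ (∃ t, G.St t = a) ∨ ∃ t, G.En t = a := by
    intro a ha
    simpa [hverts] using ha
  have hs_src : G.IsSource s := by
    rintro w (hws | ⟨t, -, ht⟩)
    · by_cases hw : w = s
      · exact ((hsiff s).1 (hw ▸ hws)).2.1 rfl
      · obtain ⟨t, ht⟩ := (hmain w s hws hw hse).2
        exact (hts t).1 ht
    · exact (hts t).2.2.1 ht
  -- a maximal vertex other than `e` has an unlabeled edge to `e`
  have he_in : ∃ a, (a, e) ∈ G.unl := by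
    obtain ⟨a, ha, hmax⟩ :=
      hac.exists_mem_forall_not_adj (F := G.verts.erase e) ⟨s, Finset.mem_erase.2 ⟨hse, hs⟩⟩
    obtain ⟨hae, ha⟩ := Finset.mem_erase.1 ha
    have hout : ∀ w, G.adj a w → w = e := fun w hw =>
      by_contra fun hwe => hmax w (Finset.mem_erase.2 ⟨hwe, AOE.adj_mem_right hw⟩) hw
    exact ⟨a, (heiff a).2 ⟨ha, hae, fun t ht => (hts t).2.2.2 (hout _ (.inr ⟨t, ht, rfl⟩)),
      fun b hb => hout b (.inl hb)⟩⟩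
  refine ⟨Set.subsingleton_of_subset_singleton (a := s) ?_, fun a b hab => ?_⟩
  · rintro r ⟨hr, hrs⟩
    rcases hmem hr with rfl | rfl | ⟨t, rfl⟩ | ⟨t, rfl⟩
    · rfl
    · obtain ⟨a, ha⟩ := he_in
      exact (hrs a (.inl ha)).elim
    · exact (hrs s (.inl ((hsiff _).2 ⟨G.stMem t, (hts t).1, fun t' => (hSE t t').symm,
        fun a ha => (hrs a (.inl ha)).elim⟩))).elim
    · exact (hrs _ (.inr ⟨t, rfl, rfl⟩)).elim
  by_cases has : a = s
  · subst has
    refine .inr ⟨hs_src, fun b hb w hw => ?_⟩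
    obtain ⟨-, -, hbEn, hbs⟩ := (hsiff b).1 hb
    rcases hw with hw | ⟨t, -, ht⟩
    exacts [hbs w hw, (hbEn t ht).elim]
  refine .inl ?_
  by_cases hbe : b = e
  · subst hbe
    obtain ⟨ha, hae, haSt, -⟩ := (heiff a).1 hab
    rcases hmem ha with rfl | rfl | ⟨t, rfl⟩ | hEn
    exacts [(has rfl).elim, (hae rfl).elim, (haSt t rfl).elim, hEn]
  · exact (hmain a b hab has hbe).1

theorem Canonical.inv (h : Canonical G) : G.Inv :=
  ⟨h.1, h.sourceInv, h.reverse.sourceInv⟩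

end

/-- In any output AOE, every unlabeled edge `(u, v)` goes from the end
vertex of some task to the start vertex of some task. -/
theorem stmt7 {V T : Type} [DecidableEq V] [Fintype T] (G A : AOE V T)
    (h : IsOutput G A) :
    ∀ u v : V, (u, v) ∈ A.unl → (∃ t, A.En t = u) ∧ ∃ t', A.St t' = v := by
  obtain ⟨hG, hsteps, hterm⟩ := h
  have hA : A.Inv := hG.inv.of_reflTransGen hsteps
  intro u v huv
  have h2 : ¬ Rule2Cond A u v := fun h => hterm _ (.rule2 u v h)
  have h3 : ¬ Rule3Cond A u v := fun h => hterm _ (.rule3 u v h)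
  refine ⟨A.exists_en_eq_of_sourceInv hA.sourceInv huv h2 h3,
    A.reverse.exists_en_eq_of_sourceInv hA.reverse_sourceInv (AOE.mem_reverse_unl.2 huv) ?_ ?_⟩
  · exact fun h => h2 (A.reverse_reverse ▸ h.reverse)
  · exact fun h => h3 (A.reverse_reverse ▸ h.reverse)

end AOEPaper
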